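/- arXiv:2602.20938 — 2 statements merged into one kernel-verified Lean document; each statement's English description precedes it below -/
import Mathlib

section
/- Let Ω ⊂ ℝ² be a bounded convex open set with diameter D = 2d + 2δ (d, δ > 0), positioned so that the points (−D/2, 0) and (D/2, 0) lie in the closure of Ω and realize the diameter. Let Ω_l = { (x, y) ∈ Ω : x < −δ } and Ω_r = { (x, y) ∈ Ω : x > δ }, and set S_l = ∂Ω ∩ ∂Ω_l and S_r = ∂Ω ∩ ∂Ω_r. Then H¹(S_l) ≥ 2d and H¹(S_r) ≥ 2d, where H¹ denotes one-dimensional Hausdorff measure. -/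
open MeasureTheory Set
open scoped ENNReal

/-!
Every vertical line through a point of `Ω` meets `closure Ω` in a segment whose top and bottom
points lie on `∂Ω` and are distinct, since `Ω` is open. Projecting onto the first coordinate is
1-Lipschitz, so over an interval `(s, t)` of such lines the upper and the lower boundary each have
`H¹ ≥ t - s`. The two are separated by the strict epigraph of the lower boundary function, which is
measurable because that function is convex, hence continuous. Since `(±(d + δ), 0) ∈ closure Ω`,
every vertical line over `(-(d + δ), d + δ)` meets `Ω`, and the boundary points over
`(-(d + δ), -δ)` lie on `∂Ω_l`, those over `(δ, d + δ)` on `∂Ω_r`.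
-/

local notation "ℝ²" => EuclideanSpace ℝ (Fin 2)

theorem LipschitzWith.ofReal_le_hausdorffMeasure_one {X : Type*} [EMetricSpace X]
    [MeasurableSpace X] [BorelSpace X] {f : X → ℝ} (hf : LipschitzWith 1 f) {T : Set X}
    {s t : ℝ} (hT : Ioo s t ⊆ f '' T) : ENNReal.ofReal (t - s) ≤ μH[1] T :=
  calc ENNReal.ofReal (t - s) = μH[1] (Ioo s t) := by rw [hausdorffMeasure_real, Real.volume_Ioo]
    _ ≤ μH[1] (f '' T) := measure_mono hT
    _ ≤ μH[1] T := by simpa using hf.hausdorffMeasure_image_le zero_le_one T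

theorem PiLp.lipschitzWith_apply {p : ℝ≥0∞} [Fact (1 ≤ p)] {ι : Type*} [Fintype ι]
    {β : ι → Type*} [∀ i, PseudoMetricSpace (β i)] (i : ι) :
    LipschitzWith 1 fun x : PiLp p β => x i :=
  LipschitzWith.of_dist_le_mul fun x y => by simpa using PiLp.dist_apply_le x y i

theorem Set.OrdConnected.Ioo_subset_of_mem_closure {α : Type*} [LinearOrder α]
    [TopologicalSpace α] [OrderTopology α] {I : Set α} (hI : I.OrdConnected) {a b : α}
    (ha : a ∈ closure I) (hb : b ∈ closure I) : Ioo a b ⊆ I := fun x ⟨hax, hxb⟩ => by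
  obtain ⟨u, hux, huI⟩ := mem_closure_iff_nhds.1 ha _ (Iio_mem_nhds hax)
  obtain ⟨v, hxv, hvI⟩ := mem_closure_iff_nhds.1 hb _ (Ioi_mem_nhds hxb)
  exact hI.out huI hvI ⟨hux.le, hxv.le⟩

theorem Convex.Ioo_subset_image_of_mem_closure {E : Type*} [AddCommGroup E] [Module ℝ E]
    [TopologicalSpace E] {Ω : Set E} (hΩ : Convex ℝ Ω) (ℓ : E →L[ℝ] ℝ) {a b : E}
    (ha : a ∈ closure Ω) (hb : b ∈ closure Ω) : Ioo (ℓ a) (ℓ b) ⊆ ℓ '' Ω :=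
  (convex_iff_ordConnected.1 (hΩ.linear_image ℓ.toLinearMap)).Ioo_subset_of_mem_closure
    (image_closure_subset_closure_image ℓ.continuous ⟨a, ha, rfl⟩)
    (image_closure_subset_closure_image ℓ.continuous ⟨b, hb, rfl⟩)

theorem csSup_notMem_of_isOpen_of_subset {α : Type*} [ConditionallyCompleteLinearOrder α]
    [TopologicalSpace α] [OrderTopology α] [NoMaxOrder α] [DenselyOrdered α] {U V : Set α}
    (hU : IsOpen U) (hUV : U ⊆ V) (hV : BddAbove V) : sSup V ∉ U := fun h => by
  obtain ⟨u, hu, hIco⟩ := exists_Ico_subset_of_mem_nhds (hU.mem_nhds h) (exists_gt _)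
  obtain ⟨y, hy, hyu⟩ := exists_between hu
  exact (le_csSup hV (hUV (hIco ⟨hy.le, hyu⟩))).not_gt hy

theorem csInf_notMem_of_isOpen_of_subset {α : Type*} [ConditionallyCompleteLinearOrder α]
    [TopologicalSpace α] [OrderTopology α] [NoMinOrder α] [DenselyOrdered α] {U V : Set α}
    (hU : IsOpen U) (hUV : U ⊆ V) (hV : BddBelow V) : sInf V ∉ U :=
  csSup_notMem_of_isOpen_of_subset (α := αᵒᵈ) hU hUV hV

theorem frontier_inter_subset_frontier_inter_frontier {X : Type*} [TopologicalSpace X]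
    {s t u : Set X} (ht : IsOpen t) (hut : u ⊆ t) :
    frontier s ∩ u ⊆ frontier s ∩ frontier (s ∩ t) := fun _ ⟨hs, hu⟩ =>
  ⟨hs, ((frontier_inter_open_inter ht).symm.subset ⟨hs, hut hu⟩).1⟩

def verticalLine (x y : ℝ) : ℝ² := !₂[x, y]

noncomputable def sliceTop (K : Set ℝ²) (x : ℝ) : ℝ := sSup (verticalLine x ⁻¹' K)

noncomputable def sliceBot (K : Set ℝ²) (x : ℝ) : ℝ := sInf (verticalLine x ⁻¹' K)

theorem verticalLine_apply_zero_one (p : ℝ²) : verticalLine (p 0) (p 1) = p := by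
  ext i; fin_cases i <;> rfl

theorem isometry_verticalLine (x : ℝ) : Isometry (verticalLine x) :=
  Isometry.of_dist_eq fun y y' => by
    simp [verticalLine, EuclideanSpace.dist_eq, Fin.sum_univ_two, Real.dist_eq,
      Real.sqrt_sq_eq_abs]

theorem smul_verticalLine_add_smul_verticalLine (a b x y x' y' : ℝ) :
    a • verticalLine x y + b • verticalLine x' y' =
      verticalLine (a * x + b * x') (a * y + b * y') := by
  ext i; fin_cases i <;> simp [verticalLine]

theorem nonempty_preimage_verticalLine_of_mem_image {K : Set ℝ²} {x : ℝ}
    (hx : x ∈ (fun p : ℝ² => p 0) '' K) : (verticalLine x ⁻¹' K).Nonempty := by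
  obtain ⟨p, hp, rfl⟩ := hx
  exact ⟨p 1, by rwa [mem_preimage, verticalLine_apply_zero_one]⟩

theorem ContinuousOn.isOpen_strictEpigraph {I : Set ℝ} {g : ℝ → ℝ} (hg : ContinuousOn g I)
    (hI : IsOpen I) : IsOpen {p : ℝ² | p 0 ∈ I ∧ g (p 0) < p 1} := by
  have hcont : ContinuousOn (fun p : ℝ² => p 1 - g (p 0)) ((· 0) ⁻¹' I) :=
    (by fun_prop : Continuous fun p : ℝ² => p 1).continuousOn.sub
      (hg.comp (by fun_prop) (mapsTo_preimage _ _))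
  convert hcont.isOpen_inter_preimage (hI.preimage (by fun_prop)) (isOpen_Ioi (a := 0)) using 1
  ext p
  simp [sub_pos]

section Slices

variable {K Ω : Set ℝ²} {x : ℝ}

theorem bddAbove_preimage_verticalLine (hK : Bornology.IsBounded K) :
    BddAbove (verticalLine x ⁻¹' K) :=
  ((isometry_verticalLine x).antilipschitz.isBounded_preimage hK).bddAbove

theorem bddBelow_preimage_verticalLine (hK : Bornology.IsBounded K) :
    BddBelow (verticalLine x ⁻¹' K) :=
  ((isometry_verticalLine x).antilipschitz.isBounded_preimage hK).bddBelow

theorem verticalLine_sliceTop_mem (hKc : IsClosed K) (hKb : Bornology.IsBounded K)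
    (hx : (verticalLine x ⁻¹' K).Nonempty) : verticalLine x (sliceTop K x) ∈ K :=
  (hKc.preimage (isometry_verticalLine x).continuous).csSup_mem hx
    (bddAbove_preimage_verticalLine hKb)

theorem verticalLine_sliceBot_mem (hKc : IsClosed K) (hKb : Bornology.IsBounded K)
    (hx : (verticalLine x ⁻¹' K).Nonempty) : verticalLine x (sliceBot K x) ∈ K :=
  (hKc.preimage (isometry_verticalLine x).continuous).csInf_mem hx
    (bddBelow_preimage_verticalLine hKb)

theorem verticalLine_sliceTop_notMem (hΩ : IsOpen Ω) (hΩK : Ω ⊆ K)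
    (hKb : Bornology.IsBounded K) : verticalLine x (sliceTop K x) ∉ Ω :=
  csSup_notMem_of_isOpen_of_subset (hΩ.preimage (isometry_verticalLine x).continuous)
    (preimage_mono hΩK) (bddAbove_preimage_verticalLine hKb)

theorem verticalLine_sliceBot_notMem (hΩ : IsOpen Ω) (hΩK : Ω ⊆ K)
    (hKb : Bornology.IsBounded K) : verticalLine x (sliceBot K x) ∉ Ω :=
  csInf_notMem_of_isOpen_of_subset (hΩ.preimage (isometry_verticalLine x).continuous)
    (preimage_mono hΩK) (bddBelow_preimage_verticalLine hKb)

theorem verticalLine_sliceTop_mem_frontier (hΩo : IsOpen Ω) (hΩb : Bornology.IsBounded Ω)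
    (hx : (verticalLine x ⁻¹' Ω).Nonempty) :
    verticalLine x (sliceTop (closure Ω) x) ∈ frontier Ω := by
  rw [hΩo.frontier_eq]
  exact ⟨verticalLine_sliceTop_mem isClosed_closure hΩb.closure
      (hx.mono (preimage_mono subset_closure)),
    verticalLine_sliceTop_notMem hΩo subset_closure hΩb.closure⟩

theorem verticalLine_sliceBot_mem_frontier (hΩo : IsOpen Ω) (hΩb : Bornology.IsBounded Ω)
    (hx : (verticalLine x ⁻¹' Ω).Nonempty) :
    verticalLine x (sliceBot (closure Ω) x) ∈ frontier Ω := by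
  rw [hΩo.frontier_eq]
  exact ⟨verticalLine_sliceBot_mem isClosed_closure hΩb.closure
      (hx.mono (preimage_mono subset_closure)),
    verticalLine_sliceBot_notMem hΩo subset_closure hΩb.closure⟩

theorem sliceBot_lt_sliceTop (hΩo : IsOpen Ω) (hΩb : Bornology.IsBounded Ω) {y : ℝ}
    (hy : verticalLine x y ∈ Ω) : sliceBot (closure Ω) x < sliceTop (closure Ω) x := by
  have hyK : y ∈ verticalLine x ⁻¹' closure Ω := subset_closure hy
  have hne : y ≠ sliceTop (closure Ω) x := fun h =>
    verticalLine_sliceTop_notMem hΩo subset_closure hΩb.closure (h ▸ hy)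
  calc sliceBot (closure Ω) x ≤ y := csInf_le (bddBelow_preimage_verticalLine hΩb.closure) hyK
    _ < sliceTop (closure Ω) x :=
      (le_csSup (bddAbove_preimage_verticalLine hΩb.closure) hyK).lt_of_ne hne

theorem convexOn_sliceBot (hKc : IsClosed K) (hKcv : Convex ℝ K) (hKb : Bornology.IsBounded K)
    {I : Set ℝ} (hI : Convex ℝ I) (hIK : ∀ x ∈ I, (verticalLine x ⁻¹' K).Nonempty) :
    ConvexOn ℝ I (sliceBot K) := by
  refine ⟨hI, fun x hx x' hx' a b ha hb hab => ?_⟩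
  have h := hKcv (verticalLine_sliceBot_mem hKc hKb (hIK x hx))
    (verticalLine_sliceBot_mem hKc hKb (hIK x' hx')) ha hb hab
  rw [smul_verticalLine_add_smul_verticalLine] at h
  simp only [smul_eq_mul]
  exact csInf_le (bddBelow_preimage_verticalLine hKb) h

end Slices

theorem ofReal_two_mul_le_hausdorffMeasure_frontier_inter {Ω : Set ℝ²} (hΩo : IsOpen Ω)
    (hΩc : Convex ℝ Ω) (hΩb : Bornology.IsBounded Ω) {s t : ℝ}
    (hst : Ioo s t ⊆ (· 0) '' Ω) :
    ENNReal.ofReal (2 * (t - s)) ≤ μH[1] (frontier Ω ∩ {p | p 0 ∈ Ioo s t}) := by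
  set S := frontier Ω ∩ {p : ℝ² | p 0 ∈ Ioo s t}
  have hslice : ∀ x ∈ Ioo s t, (verticalLine x ⁻¹' Ω).Nonempty := fun x hx =>
    nonempty_preimage_verticalLine_of_mem_image (hst hx)
  set g := sliceBot (closure Ω)
  have hg : ContinuousOn g (Ioo s t) :=
    (convexOn_sliceBot isClosed_closure hΩc.closure hΩb.closure (convex_Ioo s t)
      fun x hx => (hslice x hx).mono (preimage_mono subset_closure)).continuousOn isOpen_Ioo
  set C := {p : ℝ² | p 0 ∈ Ioo s t ∧ g (p 0) < p 1}
  have hC : MeasurableSet C := (hg.isOpen_strictEpigraph isOpen_Ioo).measurableSet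
  have hupper : ENNReal.ofReal (t - s) ≤ μH[1] (S ∩ C) :=
    (PiLp.lipschitzWith_apply 0).ofReal_le_hausdorffMeasure_one fun x hx =>
      have ⟨y, hy⟩ := hslice x hx
      ⟨verticalLine x (sliceTop (closure Ω) x),
        ⟨⟨verticalLine_sliceTop_mem_frontier hΩo hΩb (hslice x hx), hx⟩, hx,
          sliceBot_lt_sliceTop hΩo hΩb hy⟩, rfl⟩
  have hlower : ENNReal.ofReal (t - s) ≤ μH[1] (S \ C) :=
    (PiLp.lipschitzWith_apply 0).ofReal_le_hausdorffMeasure_one fun x hx =>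
      ⟨verticalLine x (g x), ⟨⟨verticalLine_sliceBot_mem_frontier hΩo hΩb (hslice x hx), hx⟩,
        fun h => lt_irrefl _ h.2⟩, rfl⟩
  calc ENNReal.ofReal (2 * (t - s)) ≤ ENNReal.ofReal (t - s) + ENNReal.ofReal (t - s) := by
        rw [two_mul]; exact ENNReal.ofReal_add_le
    _ ≤ μH[1] (S ∩ C) + μH[1] (S \ C) := add_le_add hupper hlower
    _ = μH[1] S := measure_inter_add_sdiff S hC

theorem lateral_boundary_length_bound_general
    (Ω : Set (EuclideanSpace ℝ (Fin 2))) (d δ : ℝ)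
    (hd : 0 < d) (hδ : 0 < δ)
    (hopen : IsOpen Ω) (hconv : Convex ℝ Ω) (hbdd : Bornology.IsBounded Ω)
    (hleft : (!₂[-(d + δ), 0] : EuclideanSpace ℝ (Fin 2)) ∈ closure Ω)
    (hright : (!₂[d + δ, 0] : EuclideanSpace ℝ (Fin 2)) ∈ closure Ω) :
    ENNReal.ofReal (2 * d) ≤
        μH[1] (frontier Ω ∩ frontier {p : EuclideanSpace ℝ (Fin 2) | p ∈ Ω ∧ p 0 < -δ}) ∧
      ENNReal.ofReal (2 * d) ≤
        μH[1] (frontier Ω ∩ frontier {p : EuclideanSpace ℝ (Fin 2) | p ∈ Ω ∧ δ < p 0}) := by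
  have hproj : Ioo (-(d + δ)) (d + δ) ⊆ (· 0) '' Ω := by
    simpa using hconv.Ioo_subset_image_of_mem_closure (EuclideanSpace.proj 0) hleft hright
  have hstrip : ∀ s t, -(d + δ) ≤ s → t ≤ d + δ →
      ENNReal.ofReal (2 * (t - s)) ≤ μH[1] (frontier Ω ∩ {p | p 0 ∈ Ioo s t}) :=
    fun s t hs ht =>
    ofReal_two_mul_le_hausdorffMeasure_frontier_inter hopen hconv hbdd
      ((Ioo_subset_Ioo hs ht).trans hproj)
  constructor
  · calc ENNReal.ofReal (2 * d) = ENNReal.ofReal (2 * (-δ - -(d + δ))) := by ring_nf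
      _ ≤ μH[1] (frontier Ω ∩ {p | p 0 ∈ Ioo (-(d + δ)) (-δ)}) :=
          hstrip _ _ le_rfl (by linarith)
      _ ≤ _ := measure_mono <| frontier_inter_subset_frontier_inter_frontier
          (t := {p : ℝ² | p 0 < -δ}) (isOpen_lt (by fun_prop) continuous_const) fun _ hp => hp.2
  · calc ENNReal.ofReal (2 * d) = ENNReal.ofReal (2 * (d + δ - δ)) := by ring_nf
      _ ≤ μH[1] (frontier Ω ∩ {p | p 0 ∈ Ioo δ (d + δ)}) := hstrip _ _ (by linarith) le_rfl
      _ ≤ _ := measure_mono <| frontier_inter_subset_frontier_inter_frontier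
          (t := {p : ℝ² | δ < p 0}) (isOpen_lt continuous_const (by fun_prop)) fun _ hp => hp.1

/-- **Lower bound for the lateral boundary pieces (estimate (8) in the proof of Theorem 1).**
Let `Ω ⊆ ℝ²` be a bounded convex open set with diameter `D = 2d + 2δ` (`d, δ > 0`),
positioned so that `(-D/2, 0)` and `(D/2, 0)` lie in the closure of `Ω` and realize the
diameter. With `Ω_l = {(x, y) ∈ Ω : x < -δ}`, `Ω_r = {(x, y) ∈ Ω : x > δ}`,
`S_l = ∂Ω ∩ ∂Ω_l` and `S_r = ∂Ω ∩ ∂Ω_r`, one has `H¹(S_l) ≥ 2d` and `H¹(S_r) ≥ 2d`. -/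
theorem lateral_boundary_length_bound
    (Ω : Set (EuclideanSpace ℝ (Fin 2))) (d δ : ℝ)
    (hd : 0 < d) (hδ : 0 < δ)
    (hopen : IsOpen Ω) (hconv : Convex ℝ Ω) (hbdd : Bornology.IsBounded Ω)
    (hdiam : Metric.diam Ω = 2 * d + 2 * δ)
    (hleft : (!₂[-(d + δ), 0] : EuclideanSpace ℝ (Fin 2)) ∈ closure Ω)
    (hright : (!₂[d + δ, 0] : EuclideanSpace ℝ (Fin 2)) ∈ closure Ω) :
    ENNReal.ofReal (2 * d) ≤
        μH[1] (frontier Ω ∩ frontier {p : EuclideanSpace ℝ (Fin 2) | p ∈ Ω ∧ p 0 < -δ}) ∧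
      ENNReal.ofReal (2 * d) ≤
        μH[1] (frontier Ω ∩ frontier {p : EuclideanSpace ℝ (Fin 2) | p ∈ Ω ∧ δ < p 0}) :=
  lateral_boundary_length_bound_general Ω d δ hd hδ hopen hconv hbdd hleft hright
end

section
/- Let Ω ⊂ ℝ² be a bounded convex open set with diameter D = 2d + 2δ (d, δ > 0), positioned so that the points (−D/2, 0) and (D/2, 0) lie in the closure of Ω and realize the diameter, and whose inradius equals r > 0, with d > 4r. Let Q_δ = { (x, y) ∈ Ω : |x| < δ/2 }. Then H¹(∂Ω ∩ ∂Q_δ) ≤ 2δ + 4r, where H¹ denotes one-dimensional Hausdorff measure. -/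
/-!
By convexity, `closure Ω` contains every triangle with base `[(-(d + δ), 0), (d + δ, 0)]` and
apex in `closure Ω`. Above the strip `|x| ≤ δ/2` an apex of height more than `4r` would give a
triangle containing a ball of radius `4r/3 > r`, so there `closure Ω` lies between the graphs of
its upper and lower boundary functions, both within `4r` of the axis. Coning from the two endpoints
of the diameter makes these functions `L`-Lipschitz with `L = 4r/(d + δ/2)`, and `∂Ω ∩ ∂Q_δ` is
covered by the two graphs: a point strictly between them is interior, since a supporting line
there would have to be vertical, which the two endpoints forbid. Each graph has length at most
`√(1 + L²) δ ≤ δ + 2r`.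
-/

open MeasureTheory Metric Set

local notation "ℝ²" => EuclideanSpace ℝ (Fin 2)

lemma vec2_eta (p : ℝ²) : !₂[p 0, p 1] = p := by
  ext i; fin_cases i <;> simp

lemma smul_vec2_add_smul_vec2 (s t x y x' y' : ℝ) :
    s • !₂[x, y] + t • !₂[x', y'] = (!₂[s * x + t * x', s * y + t * y'] : ℝ²) := by
  ext i; fin_cases i <;> simp

lemma dist_vec2 (x y x' y' : ℝ) :
    dist (!₂[x, y] : ℝ²) !₂[x', y'] = √(dist x x' ^ 2 + dist y y' ^ 2) := by
  simp [EuclideanSpace.dist_eq, Fin.sum_univ_two]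

section Triangle

variable {C : Set ℝ²} {a : ℝ}

lemma vec2_mem_of_abs_le (hC : Convex ℝ C) (hA : !₂[-a, 0] ∈ C) (hB : !₂[a, 0] ∈ C)
    {m : ℝ} (hm : |m| ≤ a) : !₂[m, 0] ∈ C := by
  rcases (abs_nonneg m |>.trans hm).eq_or_lt with rfl | ha
  · rw [abs_nonpos_iff.1 hm]; simpa using hA
  have hm' := abs_le.1 hm
  have := hC hA hB (a := (a - m) / (2 * a)) (b := (a + m) / (2 * a))
    (div_nonneg (by linarith) (by positivity)) (div_nonneg (by linarith) (by positivity))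
    (by field_simp; ring)
  have hx : (a - m) / (2 * a) * -a + (a + m) / (2 * a) * a = m := by field_simp; ring
  rwa [smul_vec2_add_smul_vec2, hx, mul_zero, mul_zero, add_zero] at this

/-- `hq` says that `(q, γ h)` lies in the triangle with base `[(-a, 0), (a, 0)]` and
apex `(x₀, h)`. -/
lemma vec2_mem_triangle (hC : Convex ℝ C) (hA : !₂[-a, 0] ∈ C) (hB : !₂[a, 0] ∈ C)
    {x₀ h γ q : ℝ} (hP : !₂[x₀, h] ∈ C) (hγ₀ : 0 ≤ γ) (hγ₁ : γ ≤ 1)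
    (hq : |q - γ * x₀| ≤ (1 - γ) * a) : !₂[q, γ * h] ∈ C := by
  rcases hγ₁.eq_or_lt with rfl | hγ₁
  · rw [sub_self, zero_mul, abs_nonpos_iff, sub_eq_zero, one_mul] at hq
    rwa [hq, one_mul]
  have hγ : 0 < 1 - γ := by linarith
  have hM : !₂[(q - γ * x₀) / (1 - γ), 0] ∈ C := vec2_mem_of_abs_le hC hA hB <| by
    rw [abs_div, abs_of_pos hγ, div_le_iff₀ hγ]; linarith
  have := hC hP hM hγ₀ hγ.le (by ring)
  have hx : γ * x₀ + (1 - γ) * ((q - γ * x₀) / (1 - γ)) = q := by field_simp; ring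
  rwa [smul_vec2_add_smul_vec2, hx, mul_zero, add_zero] at this

lemma ball_subset_triangle (hC : Convex ℝ C) (hA : !₂[-a, 0] ∈ C) (hB : !₂[a, 0] ∈ C)
    {x₀ h t : ℝ} (hP : !₂[x₀, h] ∈ C) (hh : h ≠ 0) (ht₀ : 0 < t) (ht₁ : 2 * t ≤ 1)
    (hρ : t * |h| ≤ (1 - 2 * t) * (a - |x₀|)) : ball !₂[x₀, t * h] (t * |h|) ⊆ C := by
  intro q hq
  have hq₀ : |q 0 - x₀| < t * |h| := by
    simpa [← Real.dist_eq] using (PiLp.dist_apply_le q _ 0).trans_lt hq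
  have hq₁ : |q 1 - t * h| < t * |h| := by
    simpa [← Real.dist_eq] using (PiLp.dist_apply_le q _ 1).trans_lt hq
  set γ := q 1 / h
  have hγh : γ * h = q 1 := div_mul_cancel₀ _ hh
  have hγ : |γ - t| < t := by
    rwa [← hγh, ← sub_mul, abs_mul, mul_lt_mul_iff_of_pos_right (abs_pos.2 hh)] at hq₁
  obtain ⟨hγ₀, hγ₁⟩ := abs_sub_lt_iff.1 hγ
  have hx₀ : |x₀| ≤ a := by
    by_contra! hx₀
    nlinarith [mul_nonneg (by linarith : 0 ≤ 1 - 2 * t) (by linarith : 0 ≤ |x₀| - a),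
      mul_pos ht₀ (abs_pos.2 hh)]
  have hq : |q 0 - γ * x₀| ≤ (1 - γ) * a := calc
    |q 0 - γ * x₀| = |(q 0 - x₀) + (1 - γ) * x₀| := by ring_nf
    _ ≤ |q 0 - x₀| + (1 - γ) * |x₀| := by
      grw [abs_add_le, abs_mul, abs_of_nonneg (by linarith : 0 ≤ 1 - γ)]
    _ ≤ (1 - γ) * a := by nlinarith
  simpa [hγh, vec2_eta] using vec2_mem_triangle hC hA hB hP (by linarith) (by linarith) hq

end Triangle

section Inradius

variable {X : Type*} [PseudoMetricSpace X] {Ω : Set X} {r : ℝ}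

lemma le_of_ball_subset_of_sSup_eq (hr : 0 < r)
    (hinr : sSup {r' : ℝ | 0 < r' ∧ ∃ c, ball c r' ⊆ Ω} = r) {c : X} {ρ : ℝ} (hρ : 0 < ρ)
    (hball : ball c ρ ⊆ Ω) : ρ ≤ r := by
  have hbdd : BddAbove {r' : ℝ | 0 < r' ∧ ∃ c, ball c r' ⊆ Ω} := by
    by_contra h
    rw [Real.sSup_of_not_bddAbove h] at hinr
    exact hr.ne hinr
  exact hinr ▸ le_csSup hbdd ⟨hρ, c, hball⟩

lemma nonempty_of_sSup_eq (hr : 0 < r)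
    (hinr : sSup {r' : ℝ | 0 < r' ∧ ∃ c, ball c r' ⊆ Ω} = r) : Ω.Nonempty := by
  rw [nonempty_iff_ne_empty]
  rintro rfl
  have : {r' : ℝ | 0 < r' ∧ ∃ c : X, ball c r' ⊆ ∅} = ∅ :=
    eq_empty_of_forall_notMem fun r' ⟨hr', c, hc⟩ ↦ hc (mem_ball_self hr')
  rw [this, Real.sSup_empty] at hinr
  exact hr.ne hinr

end Inradius

lemma abs_snd_le_of_mem_closure {Ω : Set ℝ²} {a r : ℝ} (hopen : IsOpen Ω) (hconv : Convex ℝ Ω)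
    (hA : !₂[-a, 0] ∈ closure Ω) (hB : !₂[a, 0] ∈ closure Ω) (hr : 0 < r)
    (hinr : sSup {r' : ℝ | 0 < r' ∧ ∃ c, ball c r' ⊆ Ω} = r) {p : ℝ²} (hp : p ∈ closure Ω)
    (hpa : 4 * r < a - |p 0|) : |p 1| ≤ 4 * r := by
  by_contra! hh
  set t := 4 * r / 3 / |p 1|
  have hh₀ : 0 < |p 1| := by linarith
  have ht : t * |p 1| = 4 * r / 3 := div_mul_cancel₀ _ hh₀.ne'
  have ht₀ : 0 < t := by positivity
  have ht₁ : 2 * t ≤ 1 := by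
    rw [← mul_div_assoc, div_le_one hh₀]; linarith
  have hρ : t * |p 1| ≤ (1 - 2 * t) * (a - |p 0|) := by
    refine le_of_mul_le_mul_right ?_ hh₀
    rw [ht, show (1 - 2 * t) * (a - |p 0|) * |p 1| = (|p 1| - 8 * r / 3) * (a - |p 0|) by
      linear_combination (-2 * (a - |p 0|)) * ht]
    nlinarith
  have hsub := ball_subset_triangle hconv.closure hA hB (by rwa [vec2_eta]) (abs_pos.1 hh₀)
    ht₀ ht₁ hρ
  have hball : ball !₂[p 0, t * p 1] (4 * r / 3) ⊆ Ω := by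
    have := interior_maximal hsub isOpen_ball
    rwa [hconv.interior_closure_eq_interior_of_nonempty_interior
      (by rw [hopen.interior_eq]; exact nonempty_of_sSup_eq hr hinr), hopen.interior_eq,
      ht] at this
  have := le_of_ball_subset_of_sSup_eq hr hinr (by positivity) hball
  linarith

lemma lipschitzOnWith_of_cone {φ : ℝ → ℝ} {s : Set ℝ} {M w : ℝ} (hw : 0 < w)
    (hφ₀ : ∀ x ∈ s, 0 ≤ φ x) (hφM : ∀ x ∈ s, φ x ≤ M)
    (hcone : ∀ x ∈ s, ∀ x' ∈ s, |x - x'| ≤ w → (1 - |x - x'| / w) * φ x' ≤ φ x) :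
    LipschitzOnWith (M / w).toNNReal φ s := by
  have key : ∀ x ∈ s, ∀ x' ∈ s, φ x' - φ x ≤ M / w * |x - x'| := by
    intro x hx x' hx'
    have hM := hφM x' hx'
    have hs : M / w * |x - x'| = |x - x'| / w * M := by ring
    rcases le_or_gt |x - x'| w with hxw | hxw
    · have hc := hcone x hx x' hx' hxw
      have := mul_le_mul_of_nonneg_left hM (by positivity : 0 ≤ |x - x'| / w)
      linarith
    · have hs₁ : 1 < |x - x'| / w := by rwa [one_lt_div hw]
      have := mul_le_mul_of_nonneg_right hs₁.le ((hφ₀ x' hx').trans hM)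
      linarith [hφ₀ x hx]
  refine LipschitzOnWith.of_dist_le' fun x hx x' hx' ↦ ?_
  rw [Real.dist_eq, Real.dist_eq, abs_sub_le_iff]
  exact ⟨abs_sub_comm x x' ▸ key x' hx' x hx, key x hx x' hx'⟩

def verticalSection (C : Set ℝ²) (x : ℝ) : Set ℝ := {y | !₂[x, y] ∈ C}

section VerticalSection

variable {C : Set ℝ²} {a b M : ℝ}

lemma mem_verticalSection_of_cone (hC : Convex ℝ C) (hA : !₂[-a, 0] ∈ C) (hB : !₂[a, 0] ∈ C)
    (hab : b < a) {x x' y' : ℝ} (hP : !₂[x', y'] ∈ C) (hx' : |x'| ≤ b)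
    (hxx' : |x - x'| ≤ a - b) : (1 - |x - x'| / (a - b)) * y' ∈ verticalSection C x := by
  have hw : 0 < a - b := by linarith
  set s := |x - x'| / (a - b)
  have hs : |x - x'| = s * (a - b) := (div_mul_cancel₀ _ hw.ne').symm
  have hs₀ : 0 ≤ s := by positivity
  refine vec2_mem_triangle hC hA hB hP (by rwa [sub_nonneg, div_le_one hw]) (by linarith) ?_
  calc |x - (1 - s) * x'| = |(x - x') + s * x'| := by ring_nf
    _ ≤ |x - x'| + s * |x'| := by grw [abs_add_le, abs_mul, abs_of_nonneg hs₀]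
    _ ≤ (1 - (1 - s)) * a := by nlinarith

variable (hC : Convex ℝ C) (hCc : IsClosed C) (hA : !₂[-a, 0] ∈ C) (hB : !₂[a, 0] ∈ C)
  (hab : b < a) (hM : ∀ p ∈ C, |p 0| ≤ b → |p 1| ≤ M)
include hC hCc hA hB hab hM

lemma isCompact_verticalSection_and_zero_mem {x : ℝ} (hx : x ∈ Icc (-b) b) :
    IsCompact (verticalSection C x) ∧ 0 ∈ verticalSection C x := by
  have hx : |x| ≤ b := abs_le.2 hx
  refine ⟨isCompact_of_isClosed_isBounded (hCc.preimage (by fun_prop)) ?_,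
    vec2_mem_of_abs_le hC hA hB (by linarith)⟩
  refine (isBounded_Icc (-M) M).subset fun y hy ↦ abs_le.1 ?_
  simpa using hM _ hy (by simpa using hx)

lemma lipschitzOnWith_sSup_verticalSection :
    LipschitzOnWith (M / (a - b)).toNNReal (fun x ↦ sSup (verticalSection C x)) (Icc (-b) b) := by
  refine lipschitzOnWith_of_cone (by linarith) (fun x hx ↦ ?_) (fun x hx ↦ ?_)
    (fun x hx x' hx' hxx' ↦ ?_)
  · obtain ⟨hS, h0⟩ := isCompact_verticalSection_and_zero_mem hC hCc hA hB hab hM hx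
    exact le_csSup hS.bddAbove h0
  · obtain ⟨hS, h0⟩ := isCompact_verticalSection_and_zero_mem hC hCc hA hB hab hM hx
    simpa using (le_abs_self _).trans (hM _ (hS.sSup_mem ⟨0, h0⟩) (by simpa using abs_le.2 hx))
  · obtain ⟨hS, -⟩ := isCompact_verticalSection_and_zero_mem hC hCc hA hB hab hM hx
    obtain ⟨hS', h0'⟩ := isCompact_verticalSection_and_zero_mem hC hCc hA hB hab hM hx'
    exact le_csSup hS.bddAbove <| mem_verticalSection_of_cone hC hA hB hab
      (hS'.sSup_mem ⟨0, h0'⟩) (abs_le.2 hx') hxx'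

lemma lipschitzOnWith_sInf_verticalSection :
    LipschitzOnWith (M / (a - b)).toNNReal (fun x ↦ sInf (verticalSection C x)) (Icc (-b) b) := by
  suffices LipschitzOnWith (M / (a - b)).toNNReal (fun x ↦ -sInf (verticalSection C x))
      (Icc (-b) b) by simpa [Pi.neg_def] using this.neg
  refine lipschitzOnWith_of_cone (by linarith) (fun x hx ↦ ?_) (fun x hx ↦ ?_)
    (fun x hx x' hx' hxx' ↦ ?_)
  · obtain ⟨hS, h0⟩ := isCompact_verticalSection_and_zero_mem hC hCc hA hB hab hM hx
    exact neg_nonneg.2 (csInf_le hS.bddBelow h0)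
  · obtain ⟨hS, h0⟩ := isCompact_verticalSection_and_zero_mem hC hCc hA hB hab hM hx
    simpa using (neg_le_abs _).trans (hM _ (hS.sInf_mem ⟨0, h0⟩) (by simpa using abs_le.2 hx))
  · obtain ⟨hS, -⟩ := isCompact_verticalSection_and_zero_mem hC hCc hA hB hab hM hx
    obtain ⟨hS', h0'⟩ := isCompact_verticalSection_and_zero_mem hC hCc hA hB hab hM hx'
    have := csInf_le hS.bddBelow <| mem_verticalSection_of_cone hC hA hB hab
      (hS'.sInf_mem ⟨0, h0'⟩) (abs_le.2 hx') hxx'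
    linarith

end VerticalSection

lemma strongDual_apply_vec2 (f : StrongDual ℝ ℝ²) (x y : ℝ) :
    f !₂[x, y] = x * f !₂[1, 0] + y * f !₂[0, 1] := by
  conv_lhs => rw [show (!₂[x, y] : ℝ²) = x • !₂[1, 0] + y • !₂[0, 1] by
    rw [smul_vec2_add_smul_vec2]; simp]
  rw [map_add, map_smul, map_smul, smul_eq_mul, smul_eq_mul]

/-- A supporting line of `Ω` at `p` would have to contain the vertical chord through `p`, and a
vertical line through `p` separates `(-a, 0)` from `(a, 0)`. -/
lemma mem_of_vertical_chord {Ω : Set ℝ²} (hopen : IsOpen Ω) (hconv : Convex ℝ Ω)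
    (hne : Ω.Nonempty) {a y₁ y₂ : ℝ} {p : ℝ²} (hA : !₂[-a, 0] ∈ closure Ω)
    (hB : !₂[a, 0] ∈ closure Ω) (hpa : |p 0| < a) (h₁ : !₂[p 0, y₁] ∈ closure Ω)
    (h₂ : !₂[p 0, y₂] ∈ closure Ω) (hy₁ : y₁ < p 1) (hy₂ : p 1 < y₂) : p ∈ Ω := by
  by_contra hp
  obtain ⟨f, hf⟩ := geometric_hahn_banach_open_point hconv hopen hp
  have hle : ∀ q ∈ closure Ω, f q ≤ f p := fun q hq ↦
    closure_minimal (fun q hq ↦ (hf q hq).le) (isClosed_le f.continuous continuous_const) hq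
  have hf₂ := strongDual_apply_vec2 f
  set α := f !₂[1, 0]
  set β := f !₂[0, 1]
  have hfp : f p = p 0 * α + p 1 * β := by rw [← hf₂, vec2_eta]
  have hA' := hle _ hA
  have hB' := hle _ hB
  have h₁' := hle _ h₁
  have h₂' := hle _ h₂
  rw [hf₂, hfp] at hA' hB' h₁' h₂'
  have hβ : β = 0 := by nlinarith
  rw [hβ] at hA' hB'
  have hα : α = 0 := by
    obtain ⟨hpa₁, hpa₂⟩ := abs_lt.1 hpa
    nlinarith
  obtain ⟨z, hz⟩ := hne
  have := hf z hz
  rw [← vec2_eta z, hf₂, hfp, hα, hβ] at this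
  simp at this

lemma frontier_inter_frontier_strip_subset {Ω : Set ℝ²} {a b M : ℝ} (hopen : IsOpen Ω)
    (hconv : Convex ℝ Ω) (hne : Ω.Nonempty) (hA : !₂[-a, 0] ∈ closure Ω)
    (hB : !₂[a, 0] ∈ closure Ω) (hab : b < a)
    (hM : ∀ p ∈ closure Ω, |p 0| ≤ b → |p 1| ≤ M) :
    frontier Ω ∩ frontier {p : ℝ² | p ∈ Ω ∧ |p 0| < b} ⊆
      (fun x ↦ !₂[x, sSup (verticalSection (closure Ω) x)]) '' Icc (-b) b ∪
        (fun x ↦ !₂[x, sInf (verticalSection (closure Ω) x)]) '' Icc (-b) b := by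
  rintro p ⟨hpΩ, hpQ⟩
  rw [hopen.frontier_eq] at hpΩ
  have hx : p 0 ∈ Icc (-b) b := by
    have : closure {p : ℝ² | p ∈ Ω ∧ |p 0| < b} ⊆ {p | |p 0| ≤ b} :=
      closure_minimal (fun q hq ↦ hq.2.le) (isClosed_le (by fun_prop) continuous_const)
    exact abs_le.1 (this (frontier_subset_closure hpQ))
  obtain ⟨hS, -⟩ := isCompact_verticalSection_and_zero_mem hconv.closure isClosed_closure hA hB
    hab hM hx
  have hp : p 1 ∈ verticalSection (closure Ω) (p 0) := by
    simpa [verticalSection, vec2_eta] using hpΩ.1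
  rcases (csInf_le hS.bddBelow hp).eq_or_lt with h | hlow
  · exact Or.inr ⟨p 0, hx, by simp only [h, vec2_eta]⟩
  rcases (le_csSup hS.bddAbove hp).eq_or_lt with h | hup
  · exact Or.inl ⟨p 0, hx, by simp only [← h, vec2_eta]⟩
  refine absurd (mem_of_vertical_chord hopen hconv hne hA hB ?_ (hS.sInf_mem ⟨_, hp⟩)
    (hS.sSup_mem ⟨_, hp⟩) hlow hup) hpΩ.2
  exact (abs_le.2 hx).trans_lt hab

lemma LipschitzOnWith.vec2_graph {f : ℝ → ℝ} {s : Set ℝ} {L K : NNReal}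
    (hf : LipschitzOnWith L f s) (hK : 1 + L ^ 2 ≤ K ^ 2) :
    LipschitzOnWith K (fun x ↦ (!₂[x, f x] : ℝ²)) s := by
  refine LipschitzOnWith.of_dist_le_mul fun x hx y hy ↦ ?_
  rw [dist_vec2, Real.sqrt_le_left (by positivity)]
  have hK' : (1 : ℝ) + L ^ 2 ≤ K ^ 2 := mod_cast hK
  calc dist x y ^ 2 + dist (f x) (f y) ^ 2 ≤ dist x y ^ 2 + (L * dist x y) ^ 2 := by
        grw [hf.dist_le_mul x hx y hy]
    _ = (1 + L ^ 2) * dist x y ^ 2 := by ring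
    _ ≤ K ^ 2 * dist x y ^ 2 := by gcongr
    _ = (K * dist x y) ^ 2 := by ring

lemma hausdorffMeasure_image_Icc_le {X : Type*} [EMetricSpace X] [MeasurableSpace X]
    [BorelSpace X] {g : ℝ → X} {K : NNReal} {a b : ℝ} (hg : LipschitzOnWith K g (Icc a b)) :
    μH[1] (g '' Icc a b) ≤ ENNReal.ofReal (K * (b - a)) := by
  have := hg.hausdorffMeasure_image_le zero_le_one
  rwa [ENNReal.rpow_one, hausdorffMeasure_real, Real.volume_Icc, ← ENNReal.ofReal_coe_nnreal,
    ← ENNReal.ofReal_mul K.coe_nonneg] at this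

theorem strip_boundary_length_bound_general
    (Ω : Set (EuclideanSpace ℝ (Fin 2))) (d δ r : ℝ)
    (hδ : 0 < δ) (hr : 0 < r)
    (hopen : IsOpen Ω) (hconv : Convex ℝ Ω)
    (hleft : (!₂[-(d + δ), 0] : EuclideanSpace ℝ (Fin 2)) ∈ closure Ω)
    (hright : (!₂[d + δ, 0] : EuclideanSpace ℝ (Fin 2)) ∈ closure Ω)
    (hinr : sSup {r' : ℝ | 0 < r' ∧ ∃ c, Metric.ball c r' ⊆ Ω} = r)
    (hd4r : 4 * r < d) :
    μH[1] (frontier Ω ∩ frontier {p : EuclideanSpace ℝ (Fin 2) | p ∈ Ω ∧ |p 0| < δ / 2})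
      ≤ ENNReal.ofReal (2 * δ + 4 * r) := by
  have hab : δ / 2 < d + δ := by linarith
  have hM (p) (hp : p ∈ closure Ω) (hx : |p 0| ≤ δ / 2) : |p 1| ≤ 4 * r :=
    abs_snd_le_of_mem_closure hopen hconv hleft hright hr hinr hp (by linarith)
  -- `K` is chosen so that the two graphs have total length at most `2 K δ = 2 δ + 4 r`.
  set K := (1 + 2 * r / δ).toNNReal
  have hLK : 1 + (4 * r / (d + δ - δ / 2)).toNNReal ^ 2 ≤ K ^ 2 := by
    rw [← NNReal.coe_le_coe]
    push_cast
    rw [Real.coe_toNNReal _ (by positivity), Real.coe_toNNReal _ (by positivity)]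
    have : (4 * r / (d + δ - δ / 2)) ^ 2 ≤ 2 * r / δ := by
      rw [div_pow, div_le_div_iff₀ (by nlinarith) hδ]
      nlinarith [sq_nonneg (d - δ / 2), mul_pos hr hδ]
    nlinarith [sq_nonneg (2 * r / δ), div_pos hr hδ]
  have hup := (lipschitzOnWith_sSup_verticalSection hconv.closure isClosed_closure hleft hright
    hab hM).vec2_graph hLK
  have hlow := (lipschitzOnWith_sInf_verticalSection hconv.closure isClosed_closure hleft hright
    hab hM).vec2_graph hLK
  calc _ ≤ _ := measure_mono (frontier_inter_frontier_strip_subset hopen hconv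
        (nonempty_of_sSup_eq hr hinr) hleft hright hab hM)
    _ ≤ _ := measure_union_le _ _
    _ ≤ _ := add_le_add (hausdorffMeasure_image_Icc_le hup) (hausdorffMeasure_image_Icc_le hlow)
    _ = ENNReal.ofReal (2 * δ + 4 * r) := by
      rw [sub_neg_eq_add, add_halves, ← ENNReal.ofReal_add (by positivity) (by positivity),
        Real.coe_toNNReal _ (by positivity)]
      congr 1
      field_simp
      ring

/-- **Perimeter bound for the central strip (Step (iii) of the proof of Theorem 1).**
Let `Ω ⊆ ℝ²` be a bounded convex open set with diameter `D = 2d + 2δ` (`d, δ > 0`),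
positioned so that `(-D/2, 0)` and `(D/2, 0)` lie in the closure of `Ω` and realize the
diameter, and whose inradius equals `r > 0`, with `d > 4r`. With
`Q_δ = {(x, y) ∈ Ω : |x| < δ/2}`, one has `H¹(∂Ω ∩ ∂Q_δ) ≤ 2δ + 4r`. -/
theorem strip_boundary_length_bound
    (Ω : Set (EuclideanSpace ℝ (Fin 2))) (d δ r : ℝ)
    (hd : 0 < d) (hδ : 0 < δ) (hr : 0 < r)
    (hopen : IsOpen Ω) (hconv : Convex ℝ Ω) (hbdd : Bornology.IsBounded Ω)
    (hdiam : Metric.diam Ω = 2 * d + 2 * δ)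
    (hleft : (!₂[-(d + δ), 0] : EuclideanSpace ℝ (Fin 2)) ∈ closure Ω)
    (hright : (!₂[d + δ, 0] : EuclideanSpace ℝ (Fin 2)) ∈ closure Ω)
    (hinr : sSup {r' : ℝ | 0 < r' ∧ ∃ c, Metric.ball c r' ⊆ Ω} = r)
    (hd4r : 4 * r < d) :
    μH[1] (frontier Ω ∩ frontier {p : EuclideanSpace ℝ (Fin 2) | p ∈ Ω ∧ |p 0| < δ / 2})
      ≤ ENNReal.ofReal (2 * δ + 4 * r) :=
  strip_boundary_length_bound_general Ω d δ r hδ hr hopen hconv hleft hright hinr hd4r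
end
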